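/- For every x ∈ ℝ^d, writing S = S(x) and y = x − (S/d)·𝟙 (so that ⟨y, 𝟙⟩ = 0), one has the identity ⟨x − x*, B(x) − D(x)⟩ = −(κ/d)·S·(S − S*)² − (μ + κ·S)·‖y‖². -/

import Mathlib

open scoped BigOperators RealInnerProductSpace

noncomputable section

namespace LVExample

variable {d : ℕ}

/-- `S(x) = Σ_j x_j`. -/
def Svec (x : EuclideanSpace ℝ (Fin d)) : ℝ := ∑ j, x j

/-- The birth vector field `B_j(x) = λ·S(x)`. -/
def Bvec (lam : ℝ) (x : EuclideanSpace ℝ (Fin d)) : EuclideanSpace ℝ (Fin d) :=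
  WithLp.toLp 2 (fun _ => lam * Svec x)

/-- The death vector field `D_j(x) = x_j·(μ + κ·S(x))`. -/
def Dvec (mu kappa : ℝ) (x : EuclideanSpace ℝ (Fin d)) : EuclideanSpace ℝ (Fin d) :=
  WithLp.toLp 2 (fun j => x j * (mu + kappa * Svec x))

/-- The all-ones vector `𝟙 ∈ ℝ^d`. -/
def ones (d : ℕ) : EuclideanSpace ℝ (Fin d) := WithLp.toLp 2 (fun _ => 1)

/-- The fixed point `x*` with `x*_j = S*/d` where `S* = (λ·d − μ)/κ`. -/
def xstar (d : ℕ) (lam mu kappa : ℝ) : EuclideanSpace ℝ (Fin d) :=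
  WithLp.toLp 2 (fun _ => ((lam * d - mu) / kappa) / d)

end LVExample

open LVExample

/- With `e = 𝟙` and `S = ⟪e, x⟫`, the field is `B(x) - D(x) = λS e - (μ + κS) x` and `x* = (S*/d) e`,
so the identity holds for any vector `e` of squared norm `d ≠ 0` in a real inner product space.
Expanding the inner product, Pythagoras `‖x‖² = ‖y‖² + S²/d` splits off the term `-(μ + κS)‖y‖²`,
and what remains is `S (λ - (μ + κS)/d) (S - S*)`, where `λ - (μ + κS)/d = (κ/d)(S* - S)`. -/

section InnerProductSpace

variable {E : Type*} [NormedAddCommGroup E] [InnerProductSpace ℝ E]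

theorem norm_sub_smul_sq (x e : E) (t : ℝ) :
    ‖x - t • e‖ ^ 2 = ‖x‖ ^ 2 - 2 * t * ⟪x, e⟫ + t ^ 2 * ‖e‖ ^ 2 := by
  rw [norm_sub_sq_real, inner_smul_right, norm_smul, mul_pow, Real.norm_eq_abs, sq_abs]
  ring

theorem inner_sub_smul_smul_sub_smul_eq (e x : E) {n : ℝ} (he : ‖e‖ ^ 2 = n) (hn : n ≠ 0)
    (lam mu : ℝ) {kappa : ℝ} (hkappa : kappa ≠ 0) :
    ⟪x - ((lam * n - mu) / kappa / n) • e, (lam * ⟪e, x⟫) • e - (mu + kappa * ⟪e, x⟫) • x⟫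
      = -(kappa / n) * ⟪e, x⟫ * (⟪e, x⟫ - (lam * n - mu) / kappa) ^ 2
        - (mu + kappa * ⟪e, x⟫) * ‖x - (⟪e, x⟫ / n) • e‖ ^ 2 := by
  rw [norm_sub_smul_sq, he]
  simp only [inner_sub_left, inner_sub_right, inner_smul_left, inner_smul_right,
    real_inner_self_eq_norm_sq, he, real_inner_comm x e, RCLike.conj_to_real]
  field_simp
  ring

end InnerProductSpace

namespace LVExample

variable {d : ℕ}

theorem inner_ones (x : EuclideanSpace ℝ (Fin d)) : ⟪ones d, x⟫ = Svec x := by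
  simp [ones, Svec, EuclideanSpace.inner_eq_star_dotProduct, dotProduct]

theorem norm_ones_sq : ‖ones d‖ ^ 2 = d := by
  simp [EuclideanSpace.norm_sq_eq, ones]

theorem Bvec_eq_smul_ones (lam : ℝ) (x : EuclideanSpace ℝ (Fin d)) :
    Bvec lam x = (lam * Svec x) • ones d := by
  ext j
  simp [Bvec, ones]

theorem Dvec_eq_smul (mu kappa : ℝ) (x : EuclideanSpace ℝ (Fin d)) :
    Dvec mu kappa x = (mu + kappa * Svec x) • x := by
  ext j
  simp [Dvec, mul_comm]

theorem xstar_eq_smul_ones (lam mu kappa : ℝ) :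
    xstar d lam mu kappa = ((lam * d - mu) / kappa / d) • ones d := by
  ext j
  simp [xstar, ones]

end LVExample

theorem lv_inner_identity_general (d : ℕ) (hd : 1 ≤ d) (lam mu kappa : ℝ)
    (hkappa : 0 < kappa) :
    ∀ x : EuclideanSpace ℝ (Fin d),
      ⟪x - xstar d lam mu kappa, Bvec lam x - Dvec mu kappa x⟫
        = -(kappa / d) * Svec x * (Svec x - (lam * d - mu) / kappa) ^ 2
          - (mu + kappa * Svec x) * ‖x - (Svec x / d) • ones d‖ ^ 2 := by
  intro x
  have hd0 : (d : ℝ) ≠ 0 := Nat.cast_ne_zero.mpr (Nat.one_le_iff_ne_zero.mp hd)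
  rw [Bvec_eq_smul_ones, Dvec_eq_smul, xstar_eq_smul_ones, ← inner_ones]
  exact inner_sub_smul_smul_sub_smul_eq (ones d) x norm_ones_sq hd0 lam mu hkappa.ne'

/-- for every `x ∈ ℝ^d`, writing `S = S(x)` and `y = x − (S/d)·𝟙`, one has
`⟨x − x*, B(x) − D(x)⟩ = −(κ/d)·S·(S − S*)² − (μ + κ·S)·‖y‖²`. -/
theorem lv_inner_identity (d : ℕ) (hd : 1 ≤ d) (lam mu kappa : ℝ)
    (hkappa : 0 < kappa) (hmu : 0 < mu / d) (hlam : mu / d < lam) :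
    ∀ x : EuclideanSpace ℝ (Fin d),
      ⟪x - xstar d lam mu kappa, Bvec lam x - Dvec mu kappa x⟫
        = -(kappa / d) * Svec x * (Svec x - (lam * d - mu) / kappa) ^ 2
          - (mu + kappa * Svec x) * ‖x - (Svec x / d) • ones d‖ ^ 2 :=
  lv_inner_identity_general d hd lam mu kappa hkappa
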